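/- For the disjoint union G ∪ H of graphs, max{γ_MB'(G) + γ_MB(H), γ_MB(G) + γ_MB'(H)} ≤ γ_MB'(G ∪ H) ≤ γ_MB'(G) + γ_MB'(H). -/

import Mathlib

/-!
Upper bound: in the S-game on `G ⊕ H`, Dominator answers each Staller move in the component
where it was made, following optimal S-game strategies on `G` and on `H`; once a component is
dominated, he plays on in the other one.

Lower bound: a winning strategy on `G ⊕ H` splits into strategies on `G` and `H` whose budgets
add up to at most the total one. Dominator's moves are charged to their component. Each Staller
move in `G` comes with its own split of the remaining budget; Dominator takes for `G` the largest
budget that still leaves enough for `H`, which covers all of these moves. If the board of `G` is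
already full, `G` is dominated and Staller has to move in `H`.
-/

open SimpleGraph

namespace MBD

variable {V : Type*}

/-- Dominator's claimed set `D` is a dominating set of `G`. -/
def Dominates (G : SimpleGraph V) (D : Finset V) : Prop :=
  ∀ v : V, ∃ d ∈ D, d = v ∨ G.Adj d v

/-- Staller's claimed set `S` contains the whole closed neighborhood of some vertex. -/
def StallerWinSet (G : SimpleGraph V) (S : Finset V) : Prop :=
  ∃ v : V, ∀ u : V, (u = v ∨ G.Adj u v) → u ∈ S

variable [DecidableEq V]

mutual
  /-- `DomD G k D S`: with Dominator having claimed `D`, Staller `S`, and Dominator to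
  move, Dominator has a strategy winning the Maker-Breaker domination game on `G`
  using at most `k` further moves of his own. -/
  inductive DomD (G : SimpleGraph V) : ℕ → Finset V → Finset V → Prop
    | win {k : ℕ} {D S : Finset V} : Dominates G D → DomD G k D S
    | move {k : ℕ} {D S : Finset V} (v : V) : v ∉ D → v ∉ S →
        DomS G k (insert v D) S → DomD G (k + 1) D S
  /-- Like `DomD`, but it is Staller's turn to move. -/
  inductive DomS (G : SimpleGraph V) : ℕ → Finset V → Finset V → Prop
    | win {k : ℕ} {D S : Finset V} : Dominates G D → DomS G k D S
    | move {k : ℕ} {D S : Finset V} : (∃ v : V, v ∉ D ∧ v ∉ S) →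
        (∀ v : V, v ∉ D → v ∉ S → DomD G k D (insert v S)) → DomS G k D S
end

mutual
  /-- `StallD G k D S`: with Dominator having claimed `D`, Staller `S`, and Dominator to
  move, Staller has a strategy winning (claiming a whole closed neighborhood) within at
  most `k` further moves of her own. -/
  inductive StallD (G : SimpleGraph V) : ℕ → Finset V → Finset V → Prop
    | win {k : ℕ} {D S : Finset V} : StallerWinSet G S → StallD G k D S
    | move {k : ℕ} {D S : Finset V} : (∃ v : V, v ∉ D ∧ v ∉ S) →
        (∀ v : V, v ∉ D → v ∉ S → StallS G k (insert v D) S) → StallD G k D S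
  /-- Like `StallD`, but it is Staller's turn to move. -/
  inductive StallS (G : SimpleGraph V) : ℕ → Finset V → Finset V → Prop
    | win {k : ℕ} {D S : Finset V} : StallerWinSet G S → StallS G k D S
    | move {k : ℕ} {D S : Finset V} (v : V) : v ∉ D → v ∉ S →
        StallD G k D (insert v S) → StallS G (k + 1) D S
end

/-- Dominator has a winning strategy in the D-game (Dominator starts). -/
def DominatorWinsD (G : SimpleGraph V) : Prop := ∃ k, DomD G k ∅ ∅

/-- Dominator has a winning strategy in the S-game (Staller starts). -/
def DominatorWinsS (G : SimpleGraph V) : Prop := ∃ k, DomS G k ∅ ∅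

/-- Staller has a winning strategy in the D-game (Dominator starts). -/
def StallerWinsD (G : SimpleGraph V) : Prop := ∃ k, StallD G k ∅ ∅

/-- Staller has a winning strategy in the S-game (Staller starts). -/
def StallerWinsS (G : SimpleGraph V) : Prop := ∃ k, StallS G k ∅ ∅

/-- Outcome `𝒟`: Dominator wins both the D-game and the S-game. -/
def outcomeD (G : SimpleGraph V) : Prop := DominatorWinsD G ∧ DominatorWinsS G

/-- Outcome `𝒮`: Staller wins both the D-game and the S-game. -/
def outcomeS (G : SimpleGraph V) : Prop := StallerWinsD G ∧ StallerWinsS G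

/-- Outcome `𝒩`: the first player wins in both games. -/
def outcomeN (G : SimpleGraph V) : Prop := DominatorWinsD G ∧ StallerWinsS G

/-- `γ_MB(G)`: the minimum number of Dominator's moves needed to win the D-game,
`∞` if he has no winning strategy. -/
noncomputable def gMB (G : SimpleGraph V) : ℕ∞ :=
  sInf ((fun k : ℕ => (k : ℕ∞)) '' {k | DomD G k ∅ ∅})

/-- `γ_MB'(G)`: the minimum number of Dominator's moves needed to win the S-game. -/
noncomputable def gMB' (G : SimpleGraph V) : ℕ∞ :=
  sInf ((fun k : ℕ => (k : ℕ∞)) '' {k | DomS G k ∅ ∅})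

/-- `γ_SMB(G)`: the minimum number of Staller's moves needed to win the D-game. -/
noncomputable def gSMB (G : SimpleGraph V) : ℕ∞ :=
  sInf ((fun k : ℕ => (k : ℕ∞)) '' {k | StallD G k ∅ ∅})

/-- `γ_SMB'(G)`: the minimum number of Staller's moves needed to win the S-game. -/
noncomputable def gSMB' (G : SimpleGraph V) : ℕ∞ :=
  sInf ((fun k : ℕ => (k : ℕ∞)) '' {k | StallS G k ∅ ∅})

end MBD

namespace MBD

section Game

variable {V : Type*} [DecidableEq V] {G : SimpleGraph V}

mutual

theorem DomD.mono {k k' : ℕ} {D S : Finset V} : DomD G k D S → k ≤ k' → DomD G k' D S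
  | .win hD, _ => .win hD
  | .move (k := m) v hvD hvS h, hk => by
    obtain ⟨m', rfl⟩ := Nat.exists_eq_add_of_le hk
    rw [add_right_comm]
    exact .move v hvD hvS (DomS.mono h (Nat.le_add_right m m'))

theorem DomS.mono {k k' : ℕ} {D S : Finset V} : DomS G k D S → k ≤ k' → DomS G k' D S
  | .win hD, _ => .win hD
  | .move hfree resp, hk => .move hfree fun v hvD hvS => DomD.mono (resp v hvD hvS) hk

end

mutual

theorem DomD.of_staller_subset {k : ℕ} {D S S' : Finset V} :
    DomD G k D S → S' ⊆ S → DomD G k D S'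
  | .win hD, _ => .win hD
  | .move v hvD hvS h, hS =>
    .move v hvD (fun hv => hvS (hS hv)) (DomS.of_staller_subset h hS)

/-- A Staller move onto a vertex of `S` is answered as her first move in position `(D, S)`
would have been. -/
theorem DomS.of_staller_subset {k : ℕ} {D S S' : Finset V} :
    DomS G k D S → S' ⊆ S → DomS G k D S'
  | .win hD, _ => .win hD
  | .move ⟨v, hvD, hvS⟩ resp, hS => .move ⟨v, hvD, fun hv => hvS (hS hv)⟩ fun w hwD hwS' => by
    by_cases hwS : w ∈ S
    · exact DomD.of_staller_subset (resp v hvD hvS)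
        ((Finset.insert_subset hwS hS).trans (Finset.subset_insert v S))
    · exact DomD.of_staller_subset (resp w hwD hwS) (Finset.insert_subset_insert w hS)

end

variable {k : ℕ} {D S : Finset V}

theorem DomS.toDomD : DomS G k D S → DomD G k D S
  | .win hD => .win hD
  | .move ⟨v, hvD, hvS⟩ resp => (resp v hvD hvS).of_staller_subset (Finset.subset_insert v S)

theorem DomD.dominates_of_forall_mem (hfull : ∀ v, v ∈ D ∨ v ∈ S) :
    DomD G k D S → Dominates G D
  | .win hD => hD
  | .move v hvD hvS _ => (hvS ((hfull v).resolve_left hvD)).elim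

/-- Dominator's budget `a` for the S-game is the largest one leaving enough (`n - a`) for `Q`;
every answer to a Staller move fits within it. -/
theorem exists_domS_of_forall_domD_insert {n : ℕ} {Q : ℕ → Prop} (hQ : Monotone Q)
    (hfree : ∃ v, v ∉ D ∧ v ∉ S)
    (h : ∀ v, v ∉ D → v ∉ S → ∃ a b, a + b ≤ n ∧ DomD G a D (insert v S) ∧ Q b) :
    ∃ a b, a + b ≤ n ∧ DomS G a D S ∧ Q b := by
  classical
  set a := Nat.findGreatest (fun a => Q (n - a)) n
  have ha : a ≤ n := Nat.findGreatest_le n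
  have hbudget : ∀ {a' b}, a' + b ≤ n → Q b → a' ≤ a ∧ Q (n - a) := fun {a' b} hab hb => by
    have hQa' : Q (n - a') := hQ (by omega) hb
    exact ⟨Nat.le_findGreatest (P := fun a => Q (n - a)) (by omega) hQa',
      Nat.findGreatest_spec (P := fun a => Q (n - a)) (by omega) hQa'⟩
  obtain ⟨v₀, hv₀D, hv₀S⟩ := hfree
  obtain ⟨a₀, b₀, hab₀, -, hb₀⟩ := h v₀ hv₀D hv₀S
  refine ⟨a, n - a, by omega, .move ⟨v₀, hv₀D, hv₀S⟩ fun v hvD hvS => ?_, (hbudget hab₀ hb₀).2⟩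
  obtain ⟨a', b', hab', hG, hb'⟩ := h v hvD hvS
  exact hG.mono (hbudget hab' hb').1

end Game

section Value

variable {V : Type*} [DecidableEq V] {G : SimpleGraph V} {k : ℕ}

theorem gMB_le (h : DomD G k ∅ ∅) : gMB G ≤ k := sInf_le ⟨k, h, rfl⟩

theorem gMB'_le (h : DomS G k ∅ ∅) : gMB' G ≤ k := sInf_le ⟨k, h, rfl⟩

theorem le_gMB' {m : ℕ∞} (h : ∀ k, DomS G k ∅ ∅ → m ≤ k) : m ≤ gMB' G :=
  le_sInf <| by rintro _ ⟨k, hk, rfl⟩; exact h k hk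

end Value

section Union

variable {α β : Type*} {G : SimpleGraph α} {H : SimpleGraph β}

theorem dominates_sum_disjSum_iff {DG : Finset α} {DH : Finset β} :
    Dominates (G ⊕g H) (DG.disjSum DH) ↔ Dominates G DG ∧ Dominates H DH := by
  simp [Dominates, Sum.forall, Sum.exists]

theorem dominates_sum_iff {D : Finset (α ⊕ β)} :
    Dominates (G ⊕g H) D ↔ Dominates G D.toLeft ∧ Dominates H D.toRight := by
  rw [← dominates_sum_disjSum_iff, Finset.toLeft_disjSum_toRight]

variable [DecidableEq α] [DecidableEq β]

theorem _root_.Finset.insert_inl_disjSum (x : α) (s : Finset α) (t : Finset β) :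
    insert (Sum.inl x) (s.disjSum t) = (insert x s).disjSum t := by
  ext (_ | _) <;> simp

theorem _root_.Finset.insert_inr_disjSum (y : β) (s : Finset α) (t : Finset β) :
    insert (Sum.inr y) (s.disjSum t) = s.disjSum (insert y t) := by
  ext (_ | _) <;> simp

mutual

theorem DomD.sum_of_dominates_left {l : ℕ} {DG : Finset α} {DH SH : Finset β}
    (hG : Dominates G DG) (SG : Finset α) :
    DomD H l DH SH → DomD (G ⊕g H) l (DG.disjSum DH) (SG.disjSum SH)
  | .win hH => .win (dominates_sum_disjSum_iff.2 ⟨hG, hH⟩)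
  | .move y hyD hyS h => .move (.inr y) (by simpa) (by simpa) <| by
    rw [Finset.insert_inr_disjSum]
    exact DomS.sum_of_dominates_left hG SG h

theorem DomS.sum_of_dominates_left {l : ℕ} {DG : Finset α} {DH SH : Finset β}
    (hG : Dominates G DG) (SG : Finset α) :
    DomS H l DH SH → DomS (G ⊕g H) l (DG.disjSum DH) (SG.disjSum SH)
  | .win hH => .win (dominates_sum_disjSum_iff.2 ⟨hG, hH⟩)
  | .move ⟨y, hyD, hyS⟩ resp => .move ⟨.inr y, by simpa, by simpa⟩ fun
    | .inl x, _, _ => by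
      rw [Finset.insert_inl_disjSum]
      refine DomD.of_staller_subset
        (DomD.sum_of_dominates_left hG (insert x SG) (resp y hyD hyS)) ?_
      exact Finset.disjSum_mono_right _ (Finset.subset_insert y SH)
    | .inr y', hyD', hyS' => by
      rw [Finset.insert_inr_disjSum]
      exact DomD.sum_of_dominates_left hG SG (resp y' (by simpa using hyD') (by simpa using hyS'))

end

mutual

theorem DomD.sum_of_dominates_right {k : ℕ} {DG SG : Finset α} {DH : Finset β}
    (hH : Dominates H DH) (SH : Finset β) :
    DomD G k DG SG → DomD (G ⊕g H) k (DG.disjSum DH) (SG.disjSum SH)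
  | .win hG => .win (dominates_sum_disjSum_iff.2 ⟨hG, hH⟩)
  | .move x hxD hxS h => .move (.inl x) (by simpa) (by simpa) <| by
    rw [Finset.insert_inl_disjSum]
    exact DomS.sum_of_dominates_right hH SH h

theorem DomS.sum_of_dominates_right {k : ℕ} {DG SG : Finset α} {DH : Finset β}
    (hH : Dominates H DH) (SH : Finset β) :
    DomS G k DG SG → DomS (G ⊕g H) k (DG.disjSum DH) (SG.disjSum SH)
  | .win hG => .win (dominates_sum_disjSum_iff.2 ⟨hG, hH⟩)
  | .move ⟨x, hxD, hxS⟩ resp => .move ⟨.inl x, by simpa, by simpa⟩ fun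
    | .inl x', hxD', hxS' => by
      rw [Finset.insert_inl_disjSum]
      exact DomD.sum_of_dominates_right hH SH (resp x' (by simpa using hxD') (by simpa using hxS'))
    | .inr y, _, _ => by
      rw [Finset.insert_inr_disjSum]
      refine DomD.of_staller_subset
        (DomD.sum_of_dominates_right hH (insert y SH) (resp x hxD hxS)) ?_
      exact Finset.disjSum_mono_left _ (Finset.subset_insert x SG)

end

-- `DomS.sum` hands over to the other two at the same budget, hence the `+ 1` in its measure.
mutual

theorem DomS.sum {k l : ℕ} {DG SG : Finset α} {DH SH : Finset β}
    (hG : DomS G k DG SG) (hH : DomS H l DH SH) :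
    DomS (G ⊕g H) (k + l) (DG.disjSum DH) (SG.disjSum SH) :=
  match hG, hH with
  | .win hG, hH => (hH.sum_of_dominates_left hG SG).mono (Nat.le_add_left l k)
  | hG, .win hH => (hG.sum_of_dominates_right hH SH).mono (Nat.le_add_right k l)
  | .move ⟨x, hxD, hxS⟩ respG, .move freeH respH => .move ⟨.inl x, by simpa, by simpa⟩ fun
    | .inl x', hxD', hxS' => by
      rw [Finset.insert_inl_disjSum]
      exact DomD.sum_domS (respG x' (by simpa using hxD') (by simpa using hxS'))
        (.move freeH respH)
    | .inr y', hyD', hyS' => by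
      rw [Finset.insert_inr_disjSum]
      exact DomS.sum_domD (.move ⟨x, hxD, hxS⟩ respG)
        (respH y' (by simpa using hyD') (by simpa using hyS'))
termination_by 2 * (k + l) + 1

theorem DomD.sum_domS {k l : ℕ} {DG SG : Finset α} {DH SH : Finset β}
    (hG : DomD G k DG SG) (hH : DomS H l DH SH) :
    DomD (G ⊕g H) (k + l) (DG.disjSum DH) (SG.disjSum SH) :=
  match hG with
  | .win hG => (hH.toDomD.sum_of_dominates_left hG SG).mono (Nat.le_add_left l k)
  | .move x hxD hxS h => by
    rw [add_right_comm]
    refine .move (.inl x) (by simpa) (by simpa) ?_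
    rw [Finset.insert_inl_disjSum]
    exact DomS.sum h hH
termination_by 2 * (k + l)

theorem DomS.sum_domD {k l : ℕ} {DG SG : Finset α} {DH SH : Finset β}
    (hG : DomS G k DG SG) (hH : DomD H l DH SH) :
    DomD (G ⊕g H) (k + l) (DG.disjSum DH) (SG.disjSum SH) :=
  match hH with
  | .win hH => (hG.toDomD.sum_of_dominates_right hH SH).mono (Nat.le_add_right k l)
  | .move y hyD hyS h => by
    rw [← add_assoc]
    refine .move (.inr y) (by simpa) (by simpa) ?_
    rw [Finset.insert_inr_disjSum]
    exact DomS.sum hG h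
termination_by 2 * (k + l)

end

variable {n : ℕ} {D S : Finset (α ⊕ β)}

theorem exists_domS_domD_of_forall_move (hfree : ∃ w, w ∉ D ∧ w ∉ S)
    (split : ∀ w, w ∉ D → w ∉ S → ∃ a b, a + b ≤ n ∧
      DomD G a D.toLeft (insert w S).toLeft ∧ DomD H b D.toRight (insert w S).toRight) :
    ∃ a b, a + b ≤ n ∧ DomS G a D.toLeft S.toLeft ∧ DomD H b D.toRight S.toRight := by
  by_cases hleft : ∃ x, x ∉ D.toLeft ∧ x ∉ S.toLeft
  · refine exists_domS_of_forall_domD_insert (fun _ _ hb h => h.mono hb) hleft fun x hxD hxS => ?_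
    simpa using split (.inl x) (by simpa using hxD) (by simpa using hxS)
  · push Not at hleft
    obtain ⟨y, hyD, hyS⟩ : ∃ y, .inr y ∉ D ∧ .inr y ∉ S := by
      obtain ⟨_ | y, hwD, hwS⟩ := hfree
      · exact absurd (hleft _ (by simpa using hwD)) (by simpa using hwS)
      · exact ⟨y, hwD, hwS⟩
    obtain ⟨a, b, hab, hG, hH⟩ := split _ hyD hyS
    rw [Finset.toLeft_insert_inr] at hG
    refine ⟨0, b, by omega, .win (hG.dominates_of_forall_mem fun x => ?_), ?_⟩
    · exact or_iff_not_imp_left.2 (hleft x)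
    · exact hH.of_staller_subset (by simp)

theorem exists_domD_domS_of_forall_move (hfree : ∃ w, w ∉ D ∧ w ∉ S)
    (split : ∀ w, w ∉ D → w ∉ S → ∃ a b, a + b ≤ n ∧
      DomD G a D.toLeft (insert w S).toLeft ∧ DomD H b D.toRight (insert w S).toRight) :
    ∃ a b, a + b ≤ n ∧ DomD G a D.toLeft S.toLeft ∧ DomS H b D.toRight S.toRight := by
  by_cases hright : ∃ y, y ∉ D.toRight ∧ y ∉ S.toRight
  · obtain ⟨b, a, hba, hH, hG⟩ := exists_domS_of_forall_domD_insert (n := n)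
      (Q := fun a => DomD G a D.toLeft S.toLeft) (fun _ _ ha h => h.mono ha) hright
      fun y hyD hyS => by
        obtain ⟨a, b, hab, hG, hH⟩ := split (.inr y) (by simpa using hyD) (by simpa using hyS)
        exact ⟨b, a, by omega, by simpa using hH, by simpa using hG⟩
    exact ⟨a, b, by omega, hG, hH⟩
  · push Not at hright
    obtain ⟨x, hxD, hxS⟩ : ∃ x, .inl x ∉ D ∧ .inl x ∉ S := by
      obtain ⟨x | _, hwD, hwS⟩ := hfree
      · exact ⟨x, hwD, hwS⟩
      · exact absurd (hright _ (by simpa using hwD)) (by simpa using hwS)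
    obtain ⟨a, b, hab, hG, hH⟩ := split _ hxD hxS
    rw [Finset.toRight_insert_inl] at hH
    refine ⟨a, 0, by omega, ?_, .win (hH.dominates_of_forall_mem fun y => ?_)⟩
    · exact hG.of_staller_subset (by simp)
    · exact or_iff_not_imp_left.2 (hright y)

mutual

theorem DomD.exists_split_sum {n : ℕ} {D S : Finset (α ⊕ β)} :
    DomD (G ⊕g H) n D S →
      ∃ a b, a + b ≤ n ∧ DomD G a D.toLeft S.toLeft ∧ DomD H b D.toRight S.toRight
  | .win hD =>
    let ⟨hG, hH⟩ := dominates_sum_iff.1 hD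
    ⟨0, 0, Nat.zero_le n, .win hG, .win hH⟩
  | .move (.inl x) hxD hxS h => by
    obtain ⟨a, b, hab, hG, hH⟩ := (DomS.exists_split_sum h).1
    simp only [Finset.toLeft_insert_inl, Finset.toRight_insert_inl] at hG hH
    exact ⟨a + 1, b, by omega, .move x (by simpa using hxD) (by simpa using hxS) hG, hH⟩
  | .move (.inr y) hyD hyS h => by
    obtain ⟨a, b, hab, hG, hH⟩ := (DomS.exists_split_sum h).2
    simp only [Finset.toLeft_insert_inr, Finset.toRight_insert_inr] at hG hH
    exact ⟨a, b + 1, by omega, hG, .move y (by simpa using hyD) (by simpa using hyS) hH⟩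

theorem DomS.exists_split_sum {n : ℕ} {D S : Finset (α ⊕ β)} :
    DomS (G ⊕g H) n D S →
      (∃ a b, a + b ≤ n ∧ DomS G a D.toLeft S.toLeft ∧ DomD H b D.toRight S.toRight) ∧
      (∃ a b, a + b ≤ n ∧ DomD G a D.toLeft S.toLeft ∧ DomS H b D.toRight S.toRight)
  | .win hD =>
    let ⟨hG, hH⟩ := dominates_sum_iff.1 hD
    ⟨⟨0, 0, Nat.zero_le n, .win hG, .win hH⟩, ⟨0, 0, Nat.zero_le n, .win hG, .win hH⟩⟩
  | .move hfree resp =>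
    have split := fun w hwD hwS => DomD.exists_split_sum (resp w hwD hwS)
    ⟨exists_domS_domD_of_forall_move hfree split, exists_domD_domS_of_forall_move hfree split⟩

end

theorem gMB'_sum_le : gMB' (G ⊕g H) ≤ gMB' G + gMB' H := by
  change _ ≤ sInf _ + sInf _
  rw [sInf_image, sInf_image]
  refine ENat.le_iInf₂_add_iInf₂ fun k (hk : DomS G k ∅ ∅) l (hl : DomS H l ∅ ∅) => ?_
  exact_mod_cast gMB'_le (by simpa using hk.sum hl)

theorem gMB'_add_gMB_le_gMB'_sum : gMB' G + gMB H ≤ gMB' (G ⊕g H) :=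
  le_gMB' fun n hn => by
    obtain ⟨a, b, hab, hG, hH⟩ := hn.exists_split_sum.1
    calc gMB' G + gMB H ≤ a + b := add_le_add (gMB'_le hG) (gMB_le hH)
      _ ≤ n := mod_cast hab

theorem gMB_add_gMB'_le_gMB'_sum : gMB G + gMB' H ≤ gMB' (G ⊕g H) :=
  le_gMB' fun n hn => by
    obtain ⟨a, b, hab, hG, hH⟩ := hn.exists_split_sum.2
    calc gMB G + gMB' H ≤ a + b := add_le_add (gMB_le hG) (gMB'_le hH)
      _ ≤ n := mod_cast hab

end Union

end MBD

/-- For the disjoint union `G ⊕g H`: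
`max{γ_MB'(G) + γ_MB(H), γ_MB(G) + γ_MB'(H)} ≤ γ_MB'(G ∪ H) ≤ γ_MB'(G) + γ_MB'(H)`. -/
theorem stmt_8 {α β : Type*} [Fintype α] [DecidableEq α] [Fintype β] [DecidableEq β]
    (G : SimpleGraph α) (H : SimpleGraph β) :
    max (MBD.gMB' G + MBD.gMB H) (MBD.gMB G + MBD.gMB' H) ≤ MBD.gMB' (G ⊕g H) ∧
    MBD.gMB' (G ⊕g H) ≤ MBD.gMB' G + MBD.gMB' H :=
  ⟨max_le MBD.gMB'_add_gMB_le_gMB'_sum MBD.gMB_add_gMB'_le_gMB'_sum, MBD.gMB'_sum_le⟩
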